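/- Let λ ∈ ℝ with λ ≠ 0 and let A_λ be the fuzzy sphere algebra with generators x₁, x₂, x₃. Then for all l, k ∈ {1,2,3}: Σ_{i,j} ε_{ijk} x_l x_i x_j + 2iλ Σ_{i,j,m} ε_{lim} ε_{ijk} x_j x_m = 2iλ(1 − λ²) δ_{lk} · 1 in A_λ. (This is the coefficient form, with respect to the central basis s^k, of the identity s^l = (1/(1−λ²))((1/(2iλ)) x_l x_i dx_i + ε_{lim}(dx_i) x_m) of Lemma 2.1, where dx_i = ε_{ijk} x_j s^k.) -/
import Mathlib


open scoped BigOperators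

/-- The Levi-Civita symbol on `{1,2,3}` (totally antisymmetric, `ε₁₂₃ = 1`), as a complex
number. -/
noncomputable def epsC (i j k : Fin 3) : ℂ :=
  (((j : ℕ) : ℂ) - ((i : ℕ) : ℂ)) * (((k : ℕ) : ℂ) - ((j : ℕ) : ℂ)) *
    (((k : ℕ) : ℂ) - ((i : ℕ) : ℂ)) / 2

/-- The defining relations of the fuzzy sphere algebra: the commutation relations
`x_i x_j − x_j x_i = 2iλ ε_{ijk} x_k` and the sphere relation `Σ x_i² = 1 − λ²`. -/
inductive FuzzyRel (t : ℝ) : FreeAlgebra ℂ (Fin 3) → FreeAlgebra ℂ (Fin 3) → Prop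
  | comm (i j : Fin 3) : FuzzyRel t
      (FreeAlgebra.ι ℂ i * FreeAlgebra.ι ℂ j - FreeAlgebra.ι ℂ j * FreeAlgebra.ι ℂ i)
      (∑ k, (2 * Complex.I * (t : ℂ) * epsC i j k) • FreeAlgebra.ι ℂ k)
  | sphere : FuzzyRel t (∑ i, FreeAlgebra.ι ℂ i * FreeAlgebra.ι ℂ i)
      ((1 - (t : ℂ) ^ 2) • (1 : FreeAlgebra ℂ (Fin 3)))

/-- The fuzzy sphere algebra `A_λ`, the quotient of the free algebra on `x₁,x₂,x₃` by the
two-sided ideal generated by the fuzzy sphere relations. -/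
abbrev FuzzyS2 (t : ℝ) := RingQuot (FuzzyRel t)

/-- The generators `x_i` of the fuzzy sphere algebra. -/
noncomputable def xgen (t : ℝ) (i : Fin 3) : FuzzyS2 t :=
  RingQuot.mkAlgHom ℂ (FuzzyRel t) (FreeAlgebra.ι ℂ i)


def epsZ (i j k : Fin 3) : ℤ :=
  (((j:ℕ):ℤ) - ((i:ℕ):ℤ)) * (((k:ℕ):ℤ) - ((j:ℕ):ℤ)) * (((k:ℕ):ℤ) - ((i:ℕ):ℤ)) / 2

lemma epsC_eq (i j k : Fin 3) : epsC i j k = (epsZ i j k : ℂ) := by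
  fin_cases i <;> fin_cases j <;> fin_cases k <;> norm_num [epsC, epsZ]

lemma eps_eps (l j m k : Fin 3) :
    ∑ i, epsC l i m * epsC i j k
      = (if l = k then (1:ℂ) else 0) * (if j = m then 1 else 0)
        - (if l = j then 1 else 0) * (if m = k then 1 else 0) := by
  have h : ∀ l j m k : Fin 3, ∑ i, epsZ l i m * epsZ i j k
      = (if l = k then (1:ℤ) else 0) * (if j = m then 1 else 0)
        - (if l = j then 1 else 0) * (if m = k then 1 else 0) := by decide
  have := h l j m k
  have h2 : ((∑ i, epsZ l i m * epsZ i j k : ℤ) : ℂ)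
      = ((if l = k then (1:ℤ) else 0) * (if j = m then 1 else 0)
        - (if l = j then 1 else 0) * (if m = k then 1 else 0) : ℤ) := by
    exact_mod_cast congrArg (Int.cast : ℤ → ℂ) this
  push_cast [apply_ite (Int.cast : ℤ → ℂ)] at h2
  simpa [epsC_eq] using h2

lemma delta_sum {M : Type*} [AddCommGroup M] [Module ℂ M] (v : Fin 3 → Fin 3 → M)
    (l k : Fin 3) :
    ∑ x : Fin 3, ∑ y : Fin 3, ((if l = k then (1:ℂ) else 0) * (if x = y then 1 else 0)
        - (if l = x then 1 else 0) * (if y = k then 1 else 0)) • v x y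
      = (if l = k then ∑ i, v i i else 0) - v l k := by
  by_cases hlk : l = k <;>
    simp [hlk, sub_smul, mul_ite, ite_smul, Finset.sum_sub_distrib,
      Finset.sum_ite_eq, Finset.sum_ite_eq']

lemma xcomm (t : ℝ) (i j : Fin 3) :
    xgen t i * xgen t j - xgen t j * xgen t i
      = ∑ m, (2 * Complex.I * (t : ℂ) * epsC i j m) • xgen t m := by
  have h := RingQuot.mkAlgHom_rel ℂ (FuzzyRel.comm (t := t) i j)
  simpa [xgen, map_sub, map_mul, map_sum] using h

lemma xsphere (t : ℝ) :
    ∑ i, xgen t i * xgen t i = (1 - (t : ℂ) ^ 2) • (1 : FuzzyS2 t) := by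
  have h := RingQuot.mkAlgHom_rel ℂ (FuzzyRel.sphere (t := t))
  simpa [xgen, map_sum, map_mul] using h

lemma eps_contract_x (t : ℝ) (k : Fin 3) :
    ∑ i, ∑ j, epsC i j k • (xgen t i * xgen t j)
      = (2 * Complex.I * (t : ℂ)) • xgen t k := by
  fin_cases k
  · have h := xcomm t 1 2
    simp only [Fin.sum_univ_three] at h ⊢
    norm_num [epsC] at h ⊢
    linear_combination (norm := module) h
  · have h := xcomm t 2 0
    simp only [Fin.sum_univ_three] at h ⊢
    norm_num [epsC] at h ⊢
    linear_combination (norm := module) h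
  · have h := xcomm t 0 1
    simp only [Fin.sum_univ_three] at h ⊢
    norm_num [epsC] at h ⊢
    show xgen t 0 * xgen t 1 + -1 • (xgen t 1 * xgen t 0)
        = (2 * Complex.I * (t:ℂ)) • xgen t 2
    linear_combination (norm := module) h


/-- Coefficient form of Lemma 2.1: for `λ ≠ 0` and all `l, k`,
`Σ_{i,j} ε_{ijk} x_l x_i x_j + 2iλ Σ_{i,j,m} ε_{lim} ε_{ijk} x_j x_m = 2iλ(1−λ²) δ_{lk}·1`
in the fuzzy sphere algebra `A_λ`. -/
theorem lemma_sl_coefficients (t : ℝ) (ht : t ≠ 0) (l k : Fin 3) :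
    (∑ i, ∑ j, epsC i j k • (xgen t l * xgen t i * xgen t j)) +
      (2 * Complex.I * (t : ℂ)) •
        (∑ i, ∑ j, ∑ m, (epsC l i m * epsC i j k) • (xgen t j * xgen t m)) =
      (2 * Complex.I * (t : ℂ) * (1 - (t : ℂ) ^ 2) *
        (if l = k then (1 : ℂ) else 0)) • (1 : FuzzyS2 t) := by
  have h1 : (∑ i, ∑ j, epsC i j k • (xgen t l * xgen t i * xgen t j))
      = (2 * Complex.I * (t : ℂ)) • (xgen t l * xgen t k) := by
    calc (∑ i, ∑ j, epsC i j k • (xgen t l * xgen t i * xgen t j))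
        = xgen t l * ∑ i, ∑ j, epsC i j k • (xgen t i * xgen t j) := by
          simp [Finset.mul_sum, mul_smul_comm, mul_assoc]
      _ = _ := by rw [eps_contract_x, mul_smul_comm]
  have h2 : (∑ i, ∑ j, ∑ m, (epsC l i m * epsC i j k) • (xgen t j * xgen t m))
      = (if l = k then (1:ℂ) else 0) • ((1 - (t : ℂ) ^ 2) • (1 : FuzzyS2 t))
        - xgen t l * xgen t k := by
    have swap : (∑ i, ∑ j, ∑ m, (epsC l i m * epsC i j k) • (xgen t j * xgen t m))
        = ∑ j, ∑ m, (∑ i, epsC l i m * epsC i j k) • (xgen t j * xgen t m) := by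
      rw [Finset.sum_comm]
      refine Finset.sum_congr rfl fun j _ => ?_
      rw [Finset.sum_comm]
      refine Finset.sum_congr rfl fun m _ => ?_
      rw [Finset.sum_smul]
    rw [swap]
    simp only [eps_eps]
    rw [delta_sum (fun x y => xgen t x * xgen t y) l k, xsphere t]
    by_cases hlk : l = k <;> simp [hlk]
  rw [h1, h2, smul_sub]
  simp only [smul_smul]
  module
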